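/- arXiv:1710.05785 — 2 statements merged into one kernel-verified Lean document; each statement's English description precedes it below -/
import Mathlib

section
/- Let (M, ⊕) be a commutative semigroup and for each pair (i,j) let g_{i,j} : M → M satisfy g_{i,j}(x ⊕ y) = g_{i,j}(x) ⊕ g_{i,j}(y). Suppose the synchronous iteration on n vertices is v_j^k = g_{1,j}(v_1^{k-1}) ⊕ ... ⊕ g_{n,j}(v_n^{k-1}) ⊕ c_j, and define the delta iteration by v_j^k = v_j^{k-1} ⊕ Δv_j^k and Δv_j^{k+1} = ⊕_{i=1}^n g_{i,j}(Δv_i^k), with initial values satisfying v_j^1 = v_j^0 ⊕ Δv_j^1 = g_{1,j}(v_1^0) ⊕ ... ⊕ g_{n,j}(v_n^0) ⊕ c_j. Then for all k ≥ 1, the state v_j^k produced by the delta iteration equals the state produced by the original synchronous iteration. -/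
/-- `⊕`-accumulation of `f 0, f 1, …, f m` for a binary operation `op`
(`n = m + 1` vertices, so the accumulation is over a nonempty index set). -/
def daicAccum {M : Type*} (op : M → M → M) {m : ℕ} (f : Fin (m + 1) → M) : M :=
  (List.ofFn fun i : Fin m => f i.succ).foldl op (f 0)

/-!
By distributivity of the `g i j` and commutativity/associativity of `⊕`, one synchronous step
applied to `v^k ⊕ Δv^{k+1}` equals the synchronous step applied to `v^k`, followed by `⊕` with
`⊕_i g i j (Δv_i^{k+1}) = Δv_j^{k+2}`. Hence if the two iterations agree at times `k` and `k+1`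
they agree at `k+2`, and they agree at times `0` and `1` by the initialisation.
-/

section Accum

variable {M : Type*} (op : M → M → M)

theorem op_op_op_comm (hcomm : ∀ x y : M, op x y = op y x)
    (hassoc : ∀ x y z : M, op (op x y) z = op x (op y z)) (x y z w : M) :
    op (op x y) (op z w) = op (op x z) (op y w) := by
  rw [hassoc, ← hassoc y z w, hcomm y z, hassoc, ← hassoc]

theorem List.foldl_map_op (hcomm : ∀ x y : M, op x y = op y x)
    (hassoc : ∀ x y z : M, op (op x y) z = op x (op y z)) (l : List (M × M)) (x y : M) :
    (l.map fun p => op p.1 p.2).foldl op (op x y)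
      = op ((l.map Prod.fst).foldl op x) ((l.map Prod.snd).foldl op y) := by
  induction l generalizing x y with
  | nil => rfl
  | cons p t ih =>
    simp only [List.map_cons, List.foldl_cons]
    rw [op_op_op_comm op hcomm hassoc, ih]

theorem daicAccum_op (hcomm : ∀ x y : M, op x y = op y x)
    (hassoc : ∀ x y z : M, op (op x y) z = op x (op y z)) {m : ℕ} (a b : Fin (m + 1) → M) :
    daicAccum op (fun i => op (a i) (b i)) = op (daicAccum op a) (daicAccum op b) := by
  simpa [daicAccum, List.map_ofFn, Function.comp_def] using
    List.foldl_map_op op hcomm hassoc (List.ofFn fun i : Fin m => (a i.succ, b i.succ)) (a 0) (b 0)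

theorem op_daicAccum_map_op (hcomm : ∀ x y : M, op x y = op y x)
    (hassoc : ∀ x y z : M, op (op x y) z = op x (op y z)) {m : ℕ} (f : Fin (m + 1) → M → M)
    (hf : ∀ i x y, f i (op x y) = op (f i x) (f i y)) (x d : Fin (m + 1) → M) (c : M) :
    op (daicAccum op fun i => f i (op (x i) (d i))) c
      = op (op (daicAccum op fun i => f i (x i)) c) (daicAccum op fun i => f i (d i)) := by
  simp only [hf, daicAccum_op op hcomm hassoc]
  rw [hassoc, hcomm _ c, ← hassoc]

end Accum

/-- If `(M, ⊕)` is a commutative semigroup, each `g i j` distributes over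
`⊕`, `u` is the synchronous iteration `u_j^k = ⊕_i g i j (u_i^{k-1}) ⊕ c_j`, and `(v, Δv)` is
the delta iteration with matching initialization, then for all `k ≥ 1` the delta iteration
state equals the synchronous state. -/
theorem daic_eq_sync {M : Type*} (op : M → M → M)
    (hcomm : ∀ x y : M, op x y = op y x)
    (hassoc : ∀ x y z : M, op (op x y) z = op x (op y z))
    {m : ℕ} (g : Fin (m + 1) → Fin (m + 1) → M → M)
    (hdist : ∀ i j x y, g i j (op x y) = op (g i j x) (g i j y))
    (c : Fin (m + 1) → M)
    (u v Δv : ℕ → Fin (m + 1) → M)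
    (hu : ∀ k j, u (k + 1) j = op (daicAccum op fun i => g i j (u k i)) (c j))
    (hu0 : ∀ j, u 0 j = v 0 j)
    (hv : ∀ k j, v (k + 1) j = op (v k j) (Δv (k + 1) j))
    (hΔ : ∀ k, 1 ≤ k → ∀ j, Δv (k + 1) j = daicAccum op fun i => g i j (Δv k i))
    (hinit : ∀ j, op (v 0 j) (Δv 1 j) = op (daicAccum op fun i => g i j (v 0 i)) (c j)) :
    ∀ k, 1 ≤ k → ∀ j, v k j = u k j := by
  have hu0' : u 0 = v 0 := funext hu0
  have agree : ∀ k, v k = u k ∧ v (k + 1) = u (k + 1) := by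
    intro k
    induction k with
    | zero => exact ⟨hu0'.symm, funext fun j => by rw [hv, hinit, hu, hu0']⟩
    | succ k ih =>
      obtain ⟨hk, hk1⟩ := ih
      have hu_succ : ∀ i, u (k + 1) i = op (u k i) (Δv (k + 1) i) := fun i => by
        rw [← hk1, ← hk, hv]
      refine ⟨hk1, funext fun j => ?_⟩
      rw [hv, hk1, hΔ (k + 1) (Nat.succ_pos k), hu (k + 1), hu k]
      simp only [hu_succ]
      rw [op_daicAccum_map_op op hcomm hassoc (fun i => g i j) (hdist · j)]
  exact fun k _ j => congrFun (agree k).1 j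
end

section
/- Under synchronous delta-based accumulative iteration (v_j^k = v_j^{k-1} ⊕ Δv_j^k, Δv_j^{k+1} = ⊕_i g_{i,j}(Δv_i^k)), the state after k iterations admits the closed form v_j^k = v_j^0 ⊕ Δv_j^1 ⊕ ⊕_{l=1}^{k-1} ⊕_{(i_0,...,i_{l-1}) ∈ [n]^l} g_{i_{l-1},j}(g_{i_{l-2},i_{l-1}}(... g_{i_0,i_1}(Δv_{i_0}^1)...)), i.e., v_j^k is the accumulation of the initial deltas propagated along all paths of length at most k-1 ending at j. -/
/-- The value delivered to vertex `j` along the path `i_0 → i_1 → ⋯ → i_{l-1} → j`,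
where the path is recorded as the list `[i_{l-1}, …, i_1, i_0]` (nearest hop first):
`g i_{l-1} j (g i_{l-2} i_{l-1} (⋯ (g i_0 i_1 (x i_0))))`; the empty path at `j` yields `x j`. -/
def pathVal {M : Type*} {n : ℕ} (g : Fin n → Fin n → M → M) (x : Fin n → M) :
    List (Fin n) → Fin n → M
  | [], j => x j
  | i :: p, j => g i j (pathVal g x p i)

/-- All tuples `(i_0, …, i_{l-1}) ∈ (Fin n)^l`, encoded as lists of length `l`. -/
def tuplesOfLen (n : ℕ) : ℕ → List (List (Fin n))
  | 0 => [[]]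
  | l + 1 => (tuplesOfLen n l).flatMap fun p => (List.finRange n).map fun i => i :: p

/-- All paths of length `1, 2, …, K` (tuples in `(Fin n)^l` for `1 ≤ l ≤ K`). -/
def allPathsUpTo (n K : ℕ) : List (List (Fin n)) :=
  (List.range K).flatMap fun l => tuplesOfLen n (l + 1)

/-! Adjoining a unit to `M` turns every `⊕`-accumulation into a list product in the commutative
monoid `WithOne M`, through which each `g i j` extends as a monoid hom. Then, by induction on `k`,
`Δv^{k+1}_j` is the product over the paths of length `k` ending at `j`: pushing `g i j` through the
product for `Δv^k_i` and exchanging the product over the last hop `i` with the one over paths gives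
exactly the paths of length `k + 1`. Unrolling `v^{k+1} = v^k ⊕ Δv^{k+1}` collects the lengths
`1, …, k`. -/

theorem List.prod_map_prod_univ_comm {N ι κ : Type*} [CommMonoid N] [Fintype κ] (l : List ι)
    (F : ι → κ → N) : (l.map fun a => ∏ b, F a b).prod = ∏ b, (l.map fun a => F a b).prod := by
  induction l with
  | nil => simp
  | cons a l ih => simp [ih, Finset.prod_mul_distrib]

theorem prod_map_tuplesOfLen_succ {N : Type*} [CommMonoid N] (n l : ℕ) (F : List (Fin n) → N) :
    ((tuplesOfLen n (l + 1)).map F).prod =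
      ((tuplesOfLen n l).map fun p => ∏ i, F (i :: p)).prod := by
  simp [tuplesOfLen, List.flatMap, List.prod_flatten, Fin.prod_univ_def, Function.comp_def]

theorem allPathsUpTo_succ (n K : ℕ) :
    allPathsUpTo n (K + 1) = allPathsUpTo n K ++ tuplesOfLen n (K + 1) := by
  simp [allPathsUpTo, List.range_succ]

section Semigroup

variable {M : Type*} [Semigroup M]

theorem WithOne.coe_foldl_mul (l : List M) (a : M) :
    ((l.foldl (· * ·) a : M) : WithOne M) = a * (l.map (↑)).prod := by
  induction l generalizing a with
  | nil => simp
  | cons x l ih => simp [ih, mul_assoc]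

theorem WithOne.coe_apply_eq_prod_of_map_mul {N ι : Type*} [Semigroup N] {f : M → N}
    (hf : ∀ x y, f (x * y) = f x * f y) {a : M} {l : List ι} {F : ι → M}
    (h : (a : WithOne M) = (l.map fun i => (F i : WithOne M)).prod) :
    (f a : WithOne N) = (l.map fun i => (f (F i) : WithOne N)).prod := by
  have := congrArg (WithOne.mapMulHom (MulHom.mk f hf)) h
  rwa [WithOne.mapMulHom_coe, map_list_prod, List.map_map] at this

end Semigroup

section CommSemigroup

variable {M : Type*} [CommSemigroup M]

theorem coe_daicAccum {m : ℕ} (f : Fin (m + 1) → M) :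
    ((daicAccum (· * ·) f : M) : WithOne M) = ∏ i, (f i : WithOne M) := by
  rw [daicAccum, WithOne.coe_foldl_mul, Fin.prod_univ_succ, List.map_ofFn, List.prod_ofFn]
  rfl

section Iteration

variable {m : ℕ} {g : Fin (m + 1) → Fin (m + 1) → M → M}
  (hdist : ∀ i j x y, g i j (x * y) = g i j x * g i j y) {v Δv : ℕ → Fin (m + 1) → M}
  (hΔ : ∀ k, 1 ≤ k → ∀ j, Δv (k + 1) j = daicAccum (· * ·) fun i => g i j (Δv k i))
include hdist hΔ

theorem coe_delta_eq_prod_pathVal (k : ℕ) (j : Fin (m + 1)) :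
    (Δv (k + 1) j : WithOne M) =
      ((tuplesOfLen (m + 1) k).map fun p => ((pathVal g (Δv 1) p j : M) : WithOne M)).prod := by
  induction k generalizing j with
  | zero => simp [tuplesOfLen, pathVal]
  | succ k ih =>
    rw [hΔ (k + 1) k.succ_pos j, coe_daicAccum, prod_map_tuplesOfLen_succ,
      List.prod_map_prod_univ_comm]
    exact Finset.prod_congr rfl fun i _ =>
      WithOne.coe_apply_eq_prod_of_map_mul (hdist i j) (ih i)

theorem coe_state_eq_prod_pathVal (hv : ∀ k j, v (k + 1) j = v k j * Δv (k + 1) j) (K : ℕ)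
    (j : Fin (m + 1)) :
    (v (K + 1) j : WithOne M) = ↑(v 0 j * Δv 1 j) *
      ((allPathsUpTo (m + 1) K).map fun p => ((pathVal g (Δv 1) p j : M) : WithOne M)).prod := by
  induction K with
  | zero => simp [allPathsUpTo, hv]
  | succ K ih =>
    rw [hv, WithOne.coe_mul, ih, coe_delta_eq_prod_pathVal hdist hΔ, allPathsUpTo_succ,
      List.map_append, List.prod_append, mul_assoc]

end Iteration

end CommSemigroup

/-- Under synchronous DAIC (`v_j^k = v_j^{k-1} ⊕ Δv_j^k`,
`Δv_j^{k+1} = ⊕_i g i j (Δv_i^k)`), the state after `k ≥ 1` iterations is the accumulation of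
`v_j^0 ⊕ Δv_j^1` together with the initial deltas propagated along all paths of length at
most `k - 1` ending at `j`. -/
theorem daic_closed_form {M : Type*} (op : M → M → M)
    (hcomm : ∀ x y : M, op x y = op y x)
    (hassoc : ∀ x y z : M, op (op x y) z = op x (op y z))
    {m : ℕ} (g : Fin (m + 1) → Fin (m + 1) → M → M)
    (hdist : ∀ i j x y, g i j (op x y) = op (g i j x) (g i j y))
    (v Δv : ℕ → Fin (m + 1) → M)
    (hv : ∀ k j, v (k + 1) j = op (v k j) (Δv (k + 1) j))
    (hΔ : ∀ k, 1 ≤ k → ∀ j, Δv (k + 1) j = daicAccum op fun i => g i j (Δv k i)) :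
    ∀ k, 1 ≤ k → ∀ j,
      v k j =
        ((allPathsUpTo (m + 1) (k - 1)).map fun p => pathVal g (Δv 1) p j).foldl op
          (op (v 0 j) (Δv 1 j)) := by
  let _ : CommSemigroup M := { mul := op, mul_assoc := hassoc, mul_comm := hcomm }
  intro k hk j
  obtain ⟨K, rfl⟩ := Nat.exists_eq_add_of_le' hk
  rw [show op = (· * ·) from rfl]
  apply WithOne.coe_injective
  rw [Nat.add_sub_cancel, WithOne.coe_foldl_mul, List.map_map]
  exact coe_state_eq_prod_pathVal hdist hΔ hv K j
end
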